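/- arXiv:2103.08939 — 2 statements merged into one kernel-verified Lean document; each statement's English description precedes it below -/
import Mathlib

section
/- The twisted antipode S_F(x) := u·S(x)·u⁻¹, where u := Σ fᵏ·S(fₖ) with inverse u⁻¹ = Σ S(f̄ᵏ)·f̄ₖ, satisfies the antipode axioms for the twisted bialgebra (H, ·, Δ_F, ε): writing Δ_F(x) = Σ x_{F(1)} ⊗ x_{F(2)}, one has Σ S_F(x_{F(1)})·x_{F(2)} = ε(x)·1 and Σ x_{F(1)}·S_F(x_{F(2)}) = ε(x)·1 for all x ∈ H. -/
open TensorProduct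

noncomputable section

/-- The generic "twisted bilinear map": given `H`-actions on `A` and `B`, a bilinear map
`mu : A →ₗ B →ₗ C` and an element `T = Σ T₁ ⊗ T₂` of `H ⊗ H`, this is the bilinear map
`(a, b) ↦ Σ mu (T₁ • a) (T₂ • b)`. -/
def twistBil {k H A B C : Type*} [CommRing k] [Ring H] [Algebra k H]
    [AddCommGroup A] [Module k A] [AddCommGroup B] [Module k B]
    [AddCommGroup C] [Module k C]
    (actA : H →ₗ[k] A →ₗ[k] A) (actB : H →ₗ[k] B →ₗ[k] B)
    (mu : A →ₗ[k] B →ₗ[k] C) (T : H ⊗[k] H) : A →ₗ[k] B →ₗ[k] C :=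
  TensorProduct.curry (TensorProduct.lift mu ∘ₗ
    (TensorProduct.homTensorHomMap (σ₁₂ := RingHom.id k) (M := A) (N := B) (M₂ := A)
      (N₂ := B) ∘ₗ TensorProduct.map actA actB) T)

/-- A Drinfel'd twist on a Hopf algebra `H`: an invertible element `F` of `H ⊗ H`
(with specified inverse `Finv`) satisfying the 2-cocycle condition
`(F ⊗ 1)·((Δ ⊗ id)(F)) = (1 ⊗ F)·((id ⊗ Δ)(F))` and the normalization condition
`(ε ⊗ id)(F) = 1 = (id ⊗ ε)(F)`. -/
def IsDrinfeldTwist {k H : Type*} [CommRing k] [Ring H] [HopfAlgebra k H]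
    (F Finv : H ⊗[k] H) : Prop :=
  F * Finv = 1 ∧ Finv * F = 1 ∧
  TensorProduct.map LinearMap.id ((TensorProduct.mk k H H).flip 1) F *
      TensorProduct.assoc k H H H ((Coalgebra.comul (R := k) (A := H)).rTensor H F) =
    ((1 : H) ⊗ₜ[k] F) * (Coalgebra.comul (R := k) (A := H)).lTensor H F ∧
  TensorProduct.lid k H ((Coalgebra.counit (R := k) (A := H)).rTensor H F) = 1 ∧
  TensorProduct.rid k H ((Coalgebra.counit (R := k) (A := H)).lTensor H F) = 1

/-- The twisted comultiplication `Δ_F(x) := F · Δ(x) · F⁻¹`, as a `k`-linear map. -/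
def comulF {k H : Type*} [CommRing k] [Ring H] [HopfAlgebra k H]
    (F Finv : H ⊗[k] H) : H →ₗ[k] H ⊗[k] H :=
  LinearMap.mulRight k Finv ∘ₗ LinearMap.mulLeft k F ∘ₗ Coalgebra.comul (R := k)

/-- The `R`-matrix `R := τ(F) · F⁻¹` of a Drinfel'd twist. -/
def Rmat {k H : Type*} [CommRing k] [Ring H] [Algebra k H]
    (F Finv : H ⊗[k] H) : H ⊗[k] H :=
  TensorProduct.comm k H H F * Finv

/-- The inverse `R⁻¹ = F · τ(F⁻¹)` of the `R`-matrix of a Drinfel'd twist; written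
`R⁻¹ = Σ Rₖ ⊗ Rᵏ`. -/
def RmatInv {k H : Type*} [CommRing k] [Ring H] [Algebra k H]
    (F Finv : H ⊗[k] H) : H ⊗[k] H :=
  F * TensorProduct.comm k H H Finv

/-- `H` is cocommutative if `τ ∘ Δ = Δ`. -/
def IsCocommutative (k H : Type*) [CommRing k] [Ring H] [HopfAlgebra k H] : Prop :=
  ∀ x : H, TensorProduct.comm k H H (Coalgebra.comul (R := k) x) = Coalgebra.comul (R := k) x

/-- For `T = Σ T₁ ⊗ T₂ ∈ H ⊗ H`, the element `T₁₂ = Σ T₁ ⊗ T₂ ⊗ 1` of `H ⊗ H ⊗ H`. -/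
def leg12 {k H : Type*} [CommRing k] [Ring H] [Algebra k H]
    (T : H ⊗[k] H) : H ⊗[k] (H ⊗[k] H) :=
  TensorProduct.map LinearMap.id ((TensorProduct.mk k H H).flip 1) T

/-- For `T = Σ T₁ ⊗ T₂ ∈ H ⊗ H`, the element `T₁₃ = Σ T₁ ⊗ 1 ⊗ T₂` of `H ⊗ H ⊗ H`. -/
def leg13 {k H : Type*} [CommRing k] [Ring H] [Algebra k H]
    (T : H ⊗[k] H) : H ⊗[k] (H ⊗[k] H) :=
  TensorProduct.map LinearMap.id (TensorProduct.mk k H H 1) T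

/-- For `T ∈ H ⊗ H`, the element `T₂₃ = 1 ⊗ T` of `H ⊗ H ⊗ H`. -/
def leg23 {k H : Type*} [CommRing k] [Ring H] [Algebra k H]
    (T : H ⊗[k] H) : H ⊗[k] (H ⊗[k] H) :=
  (1 : H) ⊗ₜ[k] T

/-- A (k-bilinear) left `H`-action: `(gh) • a = g • (h • a)` and `1 • a = a`. -/
def IsHAction {k H A : Type*} [CommRing k] [Ring H] [Algebra k H]
    [AddCommGroup A] [Module k A] (act : H →ₗ[k] A →ₗ[k] A) : Prop :=
  (∀ (g h : H) (a : A), act (g * h) a = act g (act h a)) ∧ ∀ a : A, act 1 a = a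

/-- An `H`-module algebra structure on `A`: a left `H`-action such that
`h • (a·b) = Σ (h⁽¹⁾ • a)·(h⁽²⁾ • b)` and `h • 1 = ε(h)·1`. -/
def IsModuleAlgebra {k H A : Type*} [CommRing k] [Ring H] [HopfAlgebra k H]
    [Ring A] [Algebra k A] (act : H →ₗ[k] A →ₗ[k] A) : Prop :=
  IsHAction act ∧
  (∀ (h : H) (a b : A),
    act h (a * b) = twistBil act act (LinearMap.mul k A) (Coalgebra.comul (R := k) h) a b) ∧
  ∀ h : H, act h 1 = Coalgebra.counit (R := k) h • (1 : A)

/-- The star product `a ⋆ b := Σ (f̄ᵏ • a)·(f̄ₖ • b)` on an `H`-module algebra,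
as a bilinear map; here `Finv = Σ f̄ᵏ ⊗ f̄ₖ` is the inverse of the twist. -/
def starBil {k H A : Type*} [CommRing k] [Ring H] [Algebra k H]
    [Ring A] [Algebra k A] (act : H →ₗ[k] A →ₗ[k] A) (Finv : H ⊗[k] H) :
    A →ₗ[k] A →ₗ[k] A :=
  twistBil act act (LinearMap.mul k A) Finv

/-- The Lie bracket of a Lie algebra `g` over `k`, as a bilinear map. -/
def lieBil (k g : Type*) [CommRing k] [LieRing g] [LieAlgebra k g] : g →ₗ[k] g →ₗ[k] g :=
  LinearMap.mk₂ k (fun x y => ⁅x, y⁆) add_lie smul_lie lie_add lie_smul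

/-- An `H`-equivariant Lie algebra structure: a left `H`-action on the Lie algebra `g`
such that `h • ⁅a, b⁆ = Σ ⁅h⁽¹⁾ • a, h⁽²⁾ • b⁆`. -/
def IsEquivLieAlgebra {k H g : Type*} [CommRing k] [Ring H] [HopfAlgebra k H]
    [LieRing g] [LieAlgebra k g] (act : H →ₗ[k] g →ₗ[k] g) : Prop :=
  IsHAction act ∧
  ∀ (h : H) (a b : g),
    act h ⁅a, b⁆ = twistBil act act (lieBil k g) (Coalgebra.comul (R := k) h) a b

/-- The twisted bracket `[a, b]⋆ := Σ ⁅f̄ᵏ • a, f̄ₖ • b⁆` on an `H`-equivariant Lie algebra. -/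
def lieStar {k H g : Type*} [CommRing k] [Ring H] [Algebra k H]
    [LieRing g] [LieAlgebra k g] (act : H →ₗ[k] g →ₗ[k] g) (Finv : H ⊗[k] H) :
    g →ₗ[k] g →ₗ[k] g :=
  twistBil act act (lieBil k g) Finv

/-- The twisted antipode `S_F(x) := u · S(x) · u⁻¹` with `u := Σ fᵏ·S(fₖ)` and
`u⁻¹ = Σ S(f̄ᵏ)·f̄ₖ`. -/
def antipodeF {k H : Type*} [CommRing k] [Ring H] [HopfAlgebra k H]
    (F Finv : H ⊗[k] H) : H →ₗ[k] H :=
  LinearMap.mulRight k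
      (LinearMap.mul' k H ((HopfAlgebra.antipode (R := k)).rTensor H Finv)) ∘ₗ
    LinearMap.mulLeft k
      (LinearMap.mul' k H ((HopfAlgebra.antipode (R := k)).lTensor H F)) ∘ₗ
    HopfAlgebra.antipode (R := k)

end

/-!
Write `u = Σ fᵏ S(fₖ)` and `v = Σ S(f̄ᵏ) f̄ₖ`. The assignments `T ↦ (m ↦ Σ S(t¹) m t²)` and
`T ↦ (m ↦ Σ t¹ m S(t²))` are a right and a left action of the algebra `H ⊗ H` on `H`, so in both
antipode sums for `Δ_F(x) = F Δ(x) F⁻¹` the twist is absorbed by `F⁻¹F = 1` and what remains is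
`ε(x)·uv`. Finally `uv = 1`: the map `a ⊗ b ⊗ c ↦ a S(b) c` sends the rearranged cocycle identity
`(1 ⊗ F⁻¹)·F₁₂ = (id ⊗ Δ)(F)·(Δ ⊗ id)(F⁻¹)` to `uv = (id ⊗ ε)(F)·(ε ⊗ id)(F⁻¹) = 1`.
-/

open Coalgebra HopfAlgebra

section Bialgebra

variable (k H : Type*) [CommSemiring k] [Semiring H] [Bialgebra k H]

def comulTensorId : H ⊗[k] H →ₐ[k] H ⊗[k] (H ⊗[k] H) :=
  (Algebra.TensorProduct.assoc k k k H H H).toAlgHom.comp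
    (Algebra.TensorProduct.map (Bialgebra.comulAlgHom k H) (AlgHom.id k H))

def idTensorComul : H ⊗[k] H →ₐ[k] H ⊗[k] (H ⊗[k] H) :=
  Algebra.TensorProduct.map (AlgHom.id k H) (Bialgebra.comulAlgHom k H)

def counitTensorId : H ⊗[k] H →ₐ[k] H :=
  (Algebra.TensorProduct.lid k H).toAlgHom.comp
    (Algebra.TensorProduct.map (Bialgebra.counitAlgHom k H) (AlgHom.id k H))

def idTensorCounit : H ⊗[k] H →ₐ[k] H :=
  (Algebra.TensorProduct.rid k k H).toAlgHom.comp
    (Algebra.TensorProduct.map (AlgHom.id k H) (Bialgebra.counitAlgHom k H))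

variable {k H}

@[simp] lemma comulTensorId_tmul (a b : H) :
    comulTensorId k H (a ⊗ₜ b) = TensorProduct.assoc k H H H (comul (R := k) a ⊗ₜ b) := rfl

@[simp] lemma idTensorComul_tmul (a b : H) :
    idTensorComul k H (a ⊗ₜ b) = a ⊗ₜ comul (R := k) b := rfl

@[simp] lemma counitTensorId_tmul (a b : H) :
    counitTensorId k H (a ⊗ₜ b) = counit (R := k) a • b := rfl

@[simp] lemma idTensorCounit_tmul (a b : H) :
    idTensorCounit k H (a ⊗ₜ b) = counit (R := k) b • a := rfl

end Bialgebra

section Antipode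

variable {k H : Type*} [CommSemiring k] [Semiring H] [HopfAlgebra k H]

-- `u = mulAntipodeLTensor k H F` and `u⁻¹ = mulAntipodeRTensor k H Finv` in `antipodeF`.
variable (k H) in
def mulAntipodeLTensor : H ⊗[k] H →ₗ[k] H := LinearMap.mul' k H ∘ₗ (antipode k).lTensor H

variable (k H) in
def mulAntipodeRTensor : H ⊗[k] H →ₗ[k] H := LinearMap.mul' k H ∘ₗ (antipode k).rTensor H

@[simp] lemma mulAntipodeLTensor_tmul (a b : H) :
    mulAntipodeLTensor k H (a ⊗ₜ b) = a * antipode k b := rfl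

@[simp] lemma mulAntipodeRTensor_tmul (a b : H) :
    mulAntipodeRTensor k H (a ⊗ₜ b) = antipode k a * b := rfl

lemma mulAntipodeLTensor_comul (x : H) :
    mulAntipodeLTensor k H (comul x) = counit (R := k) x • 1 := by
  rw [mulAntipodeLTensor, LinearMap.comp_apply, mul_antipode_lTensor_comul_apply,
    Algebra.algebraMap_eq_smul_one]

lemma mulAntipodeRTensor_comul (x : H) :
    mulAntipodeRTensor k H (comul x) = counit (R := k) x • 1 := by
  rw [mulAntipodeRTensor, LinearMap.comp_apply, mul_antipode_rTensor_comul_apply,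
    Algebra.algebraMap_eq_smul_one]

variable (k H) in
def antipodeSandwichLeft : H ⊗[k] H →ₗ[k] Module.End k H :=
  LinearMap.mul' k (Module.End k H) ∘ₗ
    TensorProduct.map (LinearMap.mul k H ∘ₗ antipode k) (LinearMap.mul k H).flip

variable (k H) in
def antipodeSandwichRight : H ⊗[k] H →ₗ[k] Module.End k H :=
  LinearMap.mul' k (Module.End k H) ∘ₗ
    TensorProduct.map (LinearMap.mul k H) ((LinearMap.mul k H).flip ∘ₗ antipode k)

@[simp] lemma antipodeSandwichLeft_tmul_apply (a b m : H) :
    antipodeSandwichLeft k H (a ⊗ₜ b) m = antipode k a * (m * b) := rfl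

@[simp] lemma antipodeSandwichRight_tmul_apply (a b m : H) :
    antipodeSandwichRight k H (a ⊗ₜ b) m = a * (m * antipode k b) := rfl

lemma antipodeSandwichLeft_mul (X Y : H ⊗[k] H) :
    antipodeSandwichLeft k H (X * Y) =
      antipodeSandwichLeft k H Y * antipodeSandwichLeft k H X := by
  induction X using TensorProduct.induction_on with
  | zero => simp
  | add X₁ X₂ h₁ h₂ => simp only [add_mul, mul_add, map_add, h₁, h₂]
  | tmul a b =>
    induction Y using TensorProduct.induction_on with
    | zero => simp
    | add Y₁ Y₂ h₁ h₂ => simp only [add_mul, mul_add, map_add, h₁, h₂]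
    | tmul c d =>
      ext m
      simp [Algebra.TensorProduct.tmul_mul_tmul, antipode_mul_antidistrib, mul_assoc]

lemma antipodeSandwichRight_mul (X Y : H ⊗[k] H) :
    antipodeSandwichRight k H (X * Y) =
      antipodeSandwichRight k H X * antipodeSandwichRight k H Y := by
  induction X using TensorProduct.induction_on with
  | zero => simp
  | add X₁ X₂ h₁ h₂ => simp only [add_mul, map_add, h₁, h₂]
  | tmul a b =>
    induction Y using TensorProduct.induction_on with
    | zero => simp
    | add Y₁ Y₂ h₁ h₂ => simp only [mul_add, map_add, h₁, h₂]
    | tmul c d =>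
      ext m
      simp [Algebra.TensorProduct.tmul_mul_tmul, antipode_mul_antidistrib, mul_assoc]

lemma antipodeSandwichLeft_one : antipodeSandwichLeft k H 1 = 1 := by
  ext m; simp [Algebra.TensorProduct.one_def]

lemma antipodeSandwichRight_one : antipodeSandwichRight k H 1 = 1 := by
  ext m; simp [Algebra.TensorProduct.one_def]

lemma antipodeSandwichLeft_apply_one (T : H ⊗[k] H) :
    antipodeSandwichLeft k H T 1 = mulAntipodeRTensor k H T := by
  induction T using TensorProduct.induction_on with
  | zero => simp
  | add X Y hX hY => simp only [map_add, LinearMap.add_apply, hX, hY]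
  | tmul a b => simp

lemma antipodeSandwichRight_apply_one (T : H ⊗[k] H) :
    antipodeSandwichRight k H T 1 = mulAntipodeLTensor k H T := by
  induction T using TensorProduct.induction_on with
  | zero => simp
  | add X Y hX hY => simp only [map_add, LinearMap.add_apply, hX, hY]
  | tmul a b => simp

variable (k H) in
def mulAntipodeMid : H ⊗[k] (H ⊗[k] H) →ₗ[k] H :=
  LinearMap.mul' k H ∘ₗ (mulAntipodeRTensor k H).lTensor H

@[simp] lemma mulAntipodeMid_tmul (a b c : H) :
    mulAntipodeMid k H (a ⊗ₜ (b ⊗ₜ c)) = a * (antipode k b * c) := rfl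

lemma mulAntipodeMid_tmul_mul_assoc_tmul (a d : H) (s t : H ⊗[k] H) :
    mulAntipodeMid k H ((a ⊗ₜ t) * TensorProduct.assoc k H H H (s ⊗ₜ d))
      = a * (mulAntipodeLTensor k H s * (mulAntipodeRTensor k H t * d)) := by
  induction s using TensorProduct.induction_on with
  | zero => simp
  | add s₁ s₂ h₁ h₂ => simp only [TensorProduct.add_tmul, map_add, mul_add, add_mul, h₁, h₂]
  | tmul s₁ s₂ =>
    induction t using TensorProduct.induction_on with
    | zero => simp
    | add t₁ t₂ h₁ h₂ => simp only [TensorProduct.tmul_add, map_add, mul_add, add_mul, h₁, h₂]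
    | tmul t₁ t₂ =>
      simp [Algebra.TensorProduct.tmul_mul_tmul, antipode_mul_antidistrib, mul_assoc]

lemma mulAntipodeMid_idTensorComul_mul_comulTensorId (X Y : H ⊗[k] H) :
    mulAntipodeMid k H (idTensorComul k H X * comulTensorId k H Y)
      = idTensorCounit k H X * counitTensorId k H Y := by
  induction X using TensorProduct.induction_on with
  | zero => simp
  | add X₁ X₂ h₁ h₂ => simp only [map_add, add_mul, h₁, h₂]
  | tmul a b =>
    induction Y using TensorProduct.induction_on with
    | zero => simp
    | add Y₁ Y₂ h₁ h₂ => simp only [map_add, mul_add, h₁, h₂]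
    | tmul c d =>
      rw [idTensorComul_tmul, comulTensorId_tmul, mulAntipodeMid_tmul_mul_assoc_tmul,
        mulAntipodeLTensor_comul, mulAntipodeRTensor_comul, idTensorCounit_tmul,
        counitTensorId_tmul]
      simp only [smul_mul_assoc, mul_smul_comm, one_mul, smul_smul, mul_comm]

end Antipode

section TwistedAntipode

variable {k H : Type*} [CommRing k] [Ring H] [HopfAlgebra k H]

lemma mulAntipodeMid_leg23_mul_leg12 (X Y : H ⊗[k] H) :
    mulAntipodeMid k H (leg23 X * leg12 Y) =
      mulAntipodeLTensor k H Y * mulAntipodeRTensor k H X := by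
  induction Y using TensorProduct.induction_on with
  | zero => simp [leg12]
  | add Y₁ Y₂ h₁ h₂ =>
    simp only [leg12, map_add, mul_add, add_mul] at h₁ h₂ ⊢
    rw [h₁, h₂]
  | tmul a b =>
    induction X using TensorProduct.induction_on with
    | zero => simp [leg23]
    | add X₁ X₂ h₁ h₂ =>
      simp only [leg23, TensorProduct.tmul_add, map_add, add_mul, mul_add] at h₁ h₂ ⊢
      rw [h₁, h₂]
    | tmul c d =>
      simp [leg12, leg23, Algebra.TensorProduct.tmul_mul_tmul, antipode_mul_antidistrib,
        mul_assoc]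

variable (F Finv : H ⊗[k] H)

lemma comulF_apply (x : H) : comulF F Finv x = F * comul (R := k) x * Finv := rfl

lemma antipodeF_apply (x : H) :
    antipodeF F Finv x
      = mulAntipodeLTensor k H F * antipode k x * mulAntipodeRTensor k H Finv := rfl

lemma mul'_rTensor_antipodeF (T : H ⊗[k] H) :
    LinearMap.mul' k H ((antipodeF F Finv).rTensor H T)
      = mulAntipodeLTensor k H F * antipodeSandwichLeft k H T (mulAntipodeRTensor k H Finv) := by
  induction T using TensorProduct.induction_on with
  | zero => simp
  | add X Y hX hY => simp only [map_add, LinearMap.add_apply, mul_add, hX, hY]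
  | tmul a b => simp [antipodeF_apply, mul_assoc]

lemma mul'_lTensor_antipodeF (T : H ⊗[k] H) :
    LinearMap.mul' k H ((antipodeF F Finv).lTensor H T)
      = antipodeSandwichRight k H T (mulAntipodeLTensor k H F) * mulAntipodeRTensor k H Finv := by
  induction T using TensorProduct.induction_on with
  | zero => simp
  | add X Y hX hY => simp only [map_add, LinearMap.add_apply, add_mul, hX, hY]
  | tmul a b => simp [antipodeF_apply, mul_assoc]

variable {F Finv}

lemma mul'_rTensor_antipodeF_comulF (hinv : Finv * F = 1) (x : H) :
    LinearMap.mul' k H ((antipodeF F Finv).rTensor H (comulF F Finv x))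
      = counit (R := k) x • (mulAntipodeLTensor k H F * mulAntipodeRTensor k H Finv) := by
  have hcancel : antipodeSandwichLeft k H F (mulAntipodeRTensor k H Finv) = 1 := by
    rw [← antipodeSandwichLeft_apply_one, ← Module.End.mul_apply, ← antipodeSandwichLeft_mul,
      hinv, antipodeSandwichLeft_one, Module.End.one_apply]
  rw [mul'_rTensor_antipodeF, comulF_apply, antipodeSandwichLeft_mul, antipodeSandwichLeft_mul,
    Module.End.mul_apply, Module.End.mul_apply, hcancel, antipodeSandwichLeft_apply_one,
    mulAntipodeRTensor_comul, map_smul, antipodeSandwichLeft_apply_one, mul_smul_comm]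

lemma mul'_lTensor_antipodeF_comulF (hinv : Finv * F = 1) (x : H) :
    LinearMap.mul' k H ((antipodeF F Finv).lTensor H (comulF F Finv x))
      = counit (R := k) x • (mulAntipodeLTensor k H F * mulAntipodeRTensor k H Finv) := by
  have hcancel : antipodeSandwichRight k H Finv (mulAntipodeLTensor k H F) = 1 := by
    rw [← antipodeSandwichRight_apply_one, ← Module.End.mul_apply, ← antipodeSandwichRight_mul,
      hinv, antipodeSandwichRight_one, Module.End.one_apply]
  rw [mul'_lTensor_antipodeF, comulF_apply, antipodeSandwichRight_mul, antipodeSandwichRight_mul,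
    Module.End.mul_apply, Module.End.mul_apply, hcancel, antipodeSandwichRight_apply_one,
    mulAntipodeLTensor_comul, map_smul, antipodeSandwichRight_apply_one, smul_mul_assoc]

end TwistedAntipode

namespace IsDrinfeldTwist

variable {k H : Type*} [CommRing k] [Ring H] [HopfAlgebra k H] {F Finv : H ⊗[k] H}

lemma leg23_inv_mul_leg12 (hF : IsDrinfeldTwist F Finv) :
    leg23 Finv * leg12 F = idTensorComul k H F * comulTensorId k H Finv := by
  obtain ⟨hFFinv, hFinvF, hcocycle, -, -⟩ := hF
  replace hcocycle : leg12 F * comulTensorId k H F = leg23 F * idTensorComul k H F := hcocycle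
  have hleg23 : leg23 Finv * leg23 F = 1 := by
    rw [leg23, leg23, Algebra.TensorProduct.tmul_mul_tmul, one_mul, hFinvF]
    rfl
  calc leg23 Finv * leg12 F
      = leg23 Finv * (leg12 F * comulTensorId k H F) * comulTensorId k H Finv := by
        rw [mul_assoc, mul_assoc, ← map_mul, hFFinv, map_one, mul_one]
    _ = idTensorComul k H F * comulTensorId k H Finv := by
        rw [hcocycle, ← mul_assoc, hleg23, one_mul]

lemma counitTensorId_inv_eq_one (hF : IsDrinfeldTwist F Finv) : counitTensorId k H Finv = 1 := by
  obtain ⟨hFFinv, -, -, hcounit, -⟩ := hF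
  replace hcounit : counitTensorId k H F = 1 := hcounit
  simpa only [map_mul, map_one, hcounit, one_mul] using congrArg (counitTensorId k H) hFFinv

lemma mulAntipodeLTensor_mul_mulAntipodeRTensor_inv (hF : IsDrinfeldTwist F Finv) :
    mulAntipodeLTensor k H F * mulAntipodeRTensor k H Finv = 1 := by
  have hcounit : idTensorCounit k H F = 1 := hF.2.2.2.2
  calc mulAntipodeLTensor k H F * mulAntipodeRTensor k H Finv
      = mulAntipodeMid k H (leg23 Finv * leg12 F) := (mulAntipodeMid_leg23_mul_leg12 _ _).symm
    _ = idTensorCounit k H F * counitTensorId k H Finv := by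
        rw [hF.leg23_inv_mul_leg12, mulAntipodeMid_idTensorComul_mul_comulTensorId]
    _ = 1 := by rw [hcounit, hF.counitTensorId_inv_eq_one, one_mul]

end IsDrinfeldTwist

/-- The twisted antipode `S_F(x) := u·S(x)·u⁻¹` satisfies the antipode axioms
for the twisted bialgebra `(H, ·, Δ_F, ε)`: `Σ S_F(x_{F(1)})·x_{F(2)} = ε(x)·1` and
`Σ x_{F(1)}·S_F(x_{F(2)}) = ε(x)·1` for all `x ∈ H`. -/
theorem antipodeF_axioms {k H : Type*} [CommRing k] [Ring H] [HopfAlgebra k H]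
    (F Finv : H ⊗[k] H) (hF : IsDrinfeldTwist F Finv) :
    (∀ x : H, LinearMap.mul' k H ((antipodeF F Finv).rTensor H (comulF F Finv x))
        = Coalgebra.counit (R := k) x • (1 : H)) ∧
    ∀ x : H, LinearMap.mul' k H ((antipodeF F Finv).lTensor H (comulF F Finv x))
        = Coalgebra.counit (R := k) x • (1 : H) := by
  have hinv : Finv * F = 1 := hF.2.1
  have huv := hF.mulAntipodeLTensor_mul_mulAntipodeRTensor_inv
  exact ⟨fun x => by rw [mul'_rTensor_antipodeF_comulF hinv x, huv],
    fun x => by rw [mul'_lTensor_antipodeF_comulF hinv x, huv]⟩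
end

section
/- For any H-equivariant Lie algebra g and any Drinfel'd twist F on H, the twisted bracket is braided antisymmetric: [a, b]⋆ = −Σ [Rₖ • b, Rᵏ • a]⋆ for all a, b ∈ g, where R⁻¹ = Σ Rₖ ⊗ Rᵏ is the inverse of the R-matrix. -/
open TensorProduct

/-!
Twisting by `T ∈ H ⊗ H` is multiplicative for a left action: twisting `[·,·]⋆` once more by
`R⁻¹ = F · τ(F⁻¹)` is twisting `[·,·]` by `F⁻¹ · R⁻¹ = τ(F⁻¹)`. Swapping the legs of the twisting
element swaps the arguments of the bilinear map, so antisymmetry of the Lie bracket turns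
the twist by `τ(F⁻¹)` of `(b, a)` into minus the twist by `F⁻¹` of `(a, b)`.
-/

section TwistBil

variable {k H A B C : Type*} [CommRing k] [Ring H] [Algebra k H]
    [AddCommGroup A] [Module k A] [AddCommGroup B] [Module k B]
    [AddCommGroup C] [Module k C]
    (actA : H →ₗ[k] A →ₗ[k] A) (actB : H →ₗ[k] B →ₗ[k] B)

@[simp]
lemma twistBil_tmul (mu : A →ₗ[k] B →ₗ[k] C) (x y : H) (a : A) (b : B) :
    twistBil actA actB mu (x ⊗ₜ[k] y) a b = mu (actA x a) (actB y b) := by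
  simp [twistBil]

@[simp]
lemma twistBil_zero (mu : A →ₗ[k] B →ₗ[k] C) : twistBil actA actB mu 0 = 0 := by
  ext; simp [twistBil]

lemma twistBil_add (mu : A →ₗ[k] B →ₗ[k] C) (S T : H ⊗[k] H) :
    twistBil actA actB mu (S + T) = twistBil actA actB mu S + twistBil actA actB mu T := by
  ext; simp [twistBil]

lemma twistBil_neg (mu : A →ₗ[k] B →ₗ[k] C) (T : H ⊗[k] H) :
    twistBil actA actB (-mu) T = -twistBil actA actB mu T := by
  induction T using TensorProduct.induction_on with
  | zero => simp
  | tmul x y => ext; simp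
  | add S T hS hT => rw [twistBil_add, twistBil_add, hS, hT, neg_add]

lemma twistBil_comm (mu : A →ₗ[k] B →ₗ[k] C) (T : H ⊗[k] H) (a : A) (b : B) :
    twistBil actB actA mu.flip (TensorProduct.comm k H H T) b a = twistBil actA actB mu T a b := by
  induction T using TensorProduct.induction_on with
  | zero => simp
  | tmul x y => simp
  | add S T hS hT => simp only [map_add, twistBil_add, LinearMap.add_apply, hS, hT]

variable {actA actB}

lemma twistBil_twistBil (hA : ∀ (x y : H) (a : A), actA (x * y) a = actA x (actA y a))
    (hB : ∀ (x y : H) (b : B), actB (x * y) b = actB x (actB y b))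
    (mu : A →ₗ[k] B →ₗ[k] C) (S T : H ⊗[k] H) :
    twistBil actA actB (twistBil actA actB mu S) T = twistBil actA actB mu (S * T) := by
  induction T using TensorProduct.induction_on with
  | zero => simp
  | add T₁ T₂ h₁ h₂ => rw [mul_add, twistBil_add, twistBil_add, h₁, h₂]
  | tmul x y =>
    induction S using TensorProduct.induction_on with
    | zero => ext; simp
    | add S₁ S₂ h₁ h₂ =>
      ext a b
      simp only [add_mul, twistBil_add, twistBil_tmul, LinearMap.add_apply, ← h₁, ← h₂]
    | tmul u v => ext; simp [hA, hB]

end TwistBil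

lemma lieBil_flip (k g : Type*) [CommRing k] [LieRing g] [LieAlgebra k g] :
    (lieBil k g).flip = -lieBil k g := by
  ext a b
  simp [lieBil, lie_skew]

lemma mul_RmatInv {k H : Type*} [CommRing k] [Ring H] [Algebra k H] {F Finv : H ⊗[k] H}
    (h : Finv * F = 1) : Finv * RmatInv F Finv = TensorProduct.comm k H H Finv := by
  rw [RmatInv, ← mul_assoc, h, one_mul]

/-- For any `H`-equivariant Lie algebra `g` and any Drinfel'd twist `F` on `H`,
the twisted bracket is braided antisymmetric: `[a, b]⋆ = −Σ [Rₖ • b, Rᵏ • a]⋆` with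
`R⁻¹ = Σ Rₖ ⊗ Rᵏ`. -/
theorem lieStar_braided_antisymm {k H g : Type*} [CommRing k] [Ring H] [HopfAlgebra k H]
    [LieRing g] [LieAlgebra k g] (act : H →ₗ[k] g →ₗ[k] g) (hact : IsEquivLieAlgebra act)
    (F Finv : H ⊗[k] H) (hF : IsDrinfeldTwist F Finv) :
    ∀ a b : g, lieStar act Finv a b
      = - twistBil act act (lieStar act Finv) (RmatInv F Finv) b a := by
  intro a b
  have hmul := hact.1.1
  rw [lieStar, twistBil_twistBil hmul hmul, mul_RmatInv hF.2.1, ← twistBil_comm,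
    lieBil_flip, twistBil_neg, LinearMap.neg_apply, LinearMap.neg_apply]
end
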